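/- If G is dicotic, G → H is dicotic, and X is a game equal in value to a dyadic rational x, then G → (X + H) = X + (G → H) as game values. -/

import Mathlib

namespace SetTheory

universe u

/-- Combinatorial pregames (Mathlib's former `SetTheory.PGame`, removed from Mathlib). -/
inductive PGame : Type (u + 1)
  | mk : ∀ α β : Type u, (α → PGame) → (β → PGame) → PGame

namespace PGame

/-- The type of Left moves. -/
def LeftMoves : PGame → Type u
  | mk l _ _ _ => l

/-- The type of Right moves. -/
def RightMoves : PGame → Type u
  | mk _ r _ _ => r

/-- Left move. -/
def moveLeft : ∀ g : PGame, LeftMoves g → PGame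
  | mk _ _ L _ => L

/-- Right move. -/
def moveRight : ∀ g : PGame, RightMoves g → PGame
  | mk _ _ _ R => R

instance : Zero PGame :=
  ⟨⟨PEmpty, PEmpty, PEmpty.elim, PEmpty.elim⟩⟩

instance : One PGame :=
  ⟨⟨PUnit, PEmpty, fun _ => 0, PEmpty.elim⟩⟩

/-- The game `∗ = {0 | 0}`. -/
def star : PGame.{u} :=
  ⟨PUnit, PUnit, fun _ => 0, fun _ => 0⟩

/-- Negation of a pregame. -/
def neg : PGame → PGame
  | ⟨l, r, L, R⟩ => ⟨r, l, fun i => neg (R i), fun i => neg (L i)⟩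

instance : Neg PGame :=
  ⟨neg⟩

/-- Disjunctive sum of pregames. -/
def addAux {xl xr : Type u} (fL : xl → PGame.{u} → PGame.{u}) (fR : xr → PGame.{u} → PGame.{u}) :
    PGame.{u} → PGame.{u}
  | mk yl yr yL yR =>
    mk (xl ⊕ yl) (xr ⊕ yr) (Sum.elim (fun i => fL i (mk yl yr yL yR)) (fun j => addAux fL fR (yL j)))
      (Sum.elim (fun i => fR i (mk yl yr yL yR)) (fun j => addAux fL fR (yR j)))

/-- Disjunctive sum: the options of `x + y` are `xL + y`, `x + yL` (resp. `xR + y`, `x + yR`). -/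
def add : PGame.{u} → PGame.{u} → PGame.{u}
  | mk _ _ xL xR => addAux (fun i => add (xL i)) (fun i => add (xR i))

instance : Add PGame.{u} :=
  ⟨add⟩

instance : Sub PGame :=
  ⟨fun x y => x + -y⟩

/-- `(leLF x y).1` is `x ≤ y` and `(leLF x y).2` is `x ⧏ y` (Conway's simultaneous definition). -/
noncomputable def leLF (x : PGame.{u}) : PGame.{u} → Prop × Prop :=
  PGame.rec (motive := fun _ => PGame.{u} → Prop × Prop)
    (fun xl xr _ _ IHxl IHxr y =>
      PGame.rec (motive := fun _ => Prop × Prop)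
        (fun yl yr yL yR IHyl IHyr =>
          ((∀ i, (IHxl i (mk yl yr yL yR)).2) ∧ (∀ j, (IHyr j).2),
           (∃ j, (IHyl j).1) ∨ (∃ i, (IHxr i (mk yl yr yL yR)).1))) y) x

/-- The order `x ≤ y` on pregames. -/
def le (x y : PGame) : Prop := (leLF x y).1

/-- Game equivalence `x ≈ y`: `x ≤ y ∧ y ≤ x`. -/
def Equiv (x y : PGame) : Prop := le x y ∧ le y x

instance : HasEquiv PGame :=
  ⟨Equiv⟩

/-- A short pregame. -/
class inductive Short : PGame.{u} → Type (u + 1)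
  | mk :
    ∀ {α β : Type u} {L : α → PGame.{u}} {R : β → PGame.{u}} (_ : ∀ i : α, Short (L i))
      (_ : ∀ j : β, Short (R j)) [Fintype α] [Fintype β] [DecidableEq α] [DecidableEq β],
      Short ⟨α, β, L, R⟩

/-- `powHalf n` is the game `1/2^n`. -/
def powHalf : ℕ → PGame
  | 0 => 1
  | n + 1 => ⟨PUnit, PUnit, fun _ => 0, fun _ => powHalf n⟩

/-- `nsmulRec` on pregames: `0 • x = 0`, `(n+1) • x = n • x + x`. -/
def nsmulPG : ℕ → PGame → PGame
  | 0, _ => 0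
  | n + 1, x => nsmulPG n x + x

/-- `zsmulRec` on pregames; its class in `Game` is `m • ⟦x⟧`. -/
def zsmulPG : ℤ → PGame → PGame
  | Int.ofNat n, x => nsmulPG n x
  | Int.negSucc n, x => -nsmulPG (n + 1) x

end PGame

end SetTheory

open SetTheory

open scoped PGame

namespace SeqCompound

open Classical in
/-- The sequential compound `G → H` of two pregames. -/
noncomputable def seqc : PGame → PGame → PGame
  | PGame.mk α β L R, H =>
    if Nonempty α then
      if Nonempty β then
        PGame.mk α β (fun a => seqc (L a) H) (fun b => seqc (R b) H)
      else
        PGame.mk α H.RightMoves (fun a => seqc (L a) H) H.moveRight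
    else
      if Nonempty β then
        PGame.mk H.LeftMoves β H.moveLeft (fun b => seqc (R b) H)
      else H

/-- A pregame is dicotic (all-small) if in every subposition,
Left has an option iff Right has an option. -/
def Dicotic : PGame → Prop
  | PGame.mk α β L R =>
    (Nonempty α ↔ Nonempty β) ∧ (∀ a, Dicotic (L a)) ∧ (∀ b, Dicotic (R b))

/-- The canonical nonnegative integer game `{n-1 | }`. -/
def intGame : ℕ → PGame
  | 0 => 0
  | n + 1 => PGame.mk PUnit PEmpty (fun _ => intGame n) PEmpty.elim

/-- `upSum k` is the disjunctive sum `↑¹ + ↑² + ⋯ + ↑ᵏ`. -/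
def upSum : ℕ → PGame
  | 0 => 0
  | k + 1 => upSum k +
      PGame.mk PUnit PUnit (fun _ => 0) (fun _ => PGame.star - upSum k)

/-- `upPow k` is the game `↑^(k+1) = {0 | ∗ - (↑¹ + ⋯ + ↑ᵏ)}`. -/
def upPow (k : ℕ) : PGame :=
  PGame.mk PUnit PUnit (fun _ => 0) (fun _ => PGame.star - upSum k)

/-- Sequential compound of a list of games. -/
noncomputable def seqList : List PGame → PGame
  | [] => 0
  | G :: l => seqc G (seqList l)

end SeqCompound

/-!
Induct on `G`. If `G` has no options, both sides are `X + H`. Otherwise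
`G → K = {G^L → K | G^R → K}`, so by induction `G → (X + H) ≈ {X + (G^L → H) | X + (G^R → H)}`,
and it remains to translate the dicotic game `A = G → H` by a number:
`{X + A^L | X + A^R} ≈ X + A`. Replace `X` by the equal game `x = ±(2^{-n} + ⋯ + 2^{-n})`, each
of whose options differs from `x` by at least `2^{-n}`. Dicotic games are infinitesimal, so
`A^R - A` and `A - A^L` are at most `2^{-n}`, and the extra options `x^L + A` and `x^R + A` of
`x + A` are dominated by `x + A^L` and `x + A^R`.
-/

universe u

namespace SetTheory.PGame

/-! ### Order -/

def LF (x y : PGame) : Prop := (leLF x y).2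

infix:50 " ⧏ " => LF

instance : LE PGame := ⟨le⟩

theorem le_iff_forall_lf {x y : PGame} :
    x ≤ y ↔ (∀ i, x.moveLeft i ⧏ y) ∧ ∀ j, x ⧏ y.moveRight j := by
  cases x; cases y; exact Iff.rfl

theorem lf_iff_exists_le {x y : PGame} :
    x ⧏ y ↔ (∃ i, x ≤ y.moveLeft i) ∨ ∃ j, x.moveRight j ≤ y := by
  cases x; cases y; exact Iff.rfl

theorem lf_iff_not_le_and_flip (x y : PGame) : (x ⧏ y ↔ ¬ y ≤ x) ∧ (y ⧏ x ↔ ¬ x ≤ y) := by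
  induction x generalizing y with
  | mk xl xr xL xR ihxl ihxr =>
  induction y with
  | mk yl yr yL yR ihyl ihyr =>
  constructor <;> rw [lf_iff_exists_le, le_iff_forall_lf, not_and_or, not_forall, not_forall]
  · exact or_congr (exists_congr fun i => ((ihyl i).2.not.trans not_not).symm)
      (exists_congr fun j => ((ihxr j _).2.not.trans not_not).symm)
  · exact or_congr (exists_congr fun i => ((ihxl i _).1.not.trans not_not).symm)
      (exists_congr fun j => ((ihyr j).1.not.trans not_not).symm)

theorem lf_iff_not_le {x y : PGame} : x ⧏ y ↔ ¬ y ≤ x := (lf_iff_not_le_and_flip x y).1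

protected theorem le_rfl : ∀ {x : PGame}, x ≤ x
  | mk _ _ xL xR => le_iff_forall_lf.2
      ⟨fun i => lf_iff_exists_le.2 (.inl ⟨i, PGame.le_rfl (x := xL i)⟩),
        fun j => lf_iff_exists_le.2 (.inr ⟨j, PGame.le_rfl (x := xR j)⟩)⟩

theorem le_trans_of_options {a b c : PGame}
    (hL : ∀ i, b ≤ c → c ≤ a.moveLeft i → b ≤ a.moveLeft i)
    (hR : ∀ j, c.moveRight j ≤ a → a ≤ b → c.moveRight j ≤ b) (hab : a ≤ b) (hbc : b ≤ c) :
    a ≤ c := by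
  rw [le_iff_forall_lf] at hab hbc ⊢
  refine ⟨fun i => lf_iff_not_le.2 fun hc => ?_, fun j => lf_iff_not_le.2 fun hc => ?_⟩
  · exact lf_iff_not_le.1 (hab.1 i) (hL i (le_iff_forall_lf.2 hbc) hc)
  · exact lf_iff_not_le.1 (hbc.2 j) (hR j hc (le_iff_forall_lf.2 hab))

-- The three rotations are proved together: each one needs the others on smaller positions.
theorem le_trans_rotations (x y z : PGame) :
    (x ≤ y → y ≤ z → x ≤ z) ∧ (y ≤ z → z ≤ x → y ≤ x) ∧ (z ≤ x → x ≤ y → z ≤ y) := by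
  induction x generalizing y z with
  | mk xl xr xL xR ihxl ihxr =>
  induction y generalizing z with
  | mk yl yr yL yR ihyl ihyr =>
  induction z with
  | mk zl zr zL zR ihzl ihzr =>
  exact ⟨le_trans_of_options (fun i => (ihxl i _ _).2.1) (fun j => (ihzr j).2.2),
    le_trans_of_options (fun i => (ihyl i _).2.2) (fun j => (ihxr j _ _).1),
    le_trans_of_options (fun i => (ihzl i).1) (fun j => (ihyr j _).2.1)⟩

instance : Preorder PGame where
  le_refl _ := PGame.le_rfl
  le_trans x y z := (le_trans_rotations x y z).1

theorem lf_of_le_moveLeft {x y : PGame} {i : y.LeftMoves} (h : x ≤ y.moveLeft i) : x ⧏ y :=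
  lf_iff_exists_le.2 (.inl ⟨i, h⟩)

theorem lf_of_moveRight_le {x y : PGame} {j : x.RightMoves} (h : x.moveRight j ≤ y) : x ⧏ y :=
  lf_iff_exists_le.2 (.inr ⟨j, h⟩)

theorem moveLeft_lf {x : PGame} (i : x.LeftMoves) : x.moveLeft i ⧏ x :=
  (le_iff_forall_lf.1 (le_refl x)).1 i

theorem lf_moveRight {x : PGame} (j : x.RightMoves) : x ⧏ x.moveRight j :=
  (le_iff_forall_lf.1 (le_refl x)).2 j

theorem lf_of_le_of_lf {x y z : PGame} (h₁ : x ≤ y) (h₂ : y ⧏ z) : x ⧏ z :=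
  lf_iff_not_le.2 fun h => lf_iff_not_le.1 h₂ (h.trans h₁)

theorem lf_of_lf_of_le {x y z : PGame} (h₁ : x ⧏ y) (h₂ : y ≤ z) : x ⧏ z :=
  lf_iff_not_le.2 fun h => lf_iff_not_le.1 h₁ (h₂.trans h)

theorem equiv_rfl {x : PGame} : x ≈ x := ⟨le_refl x, le_refl x⟩

theorem equiv_symm {x y : PGame} (h : x ≈ y) : y ≈ x := ⟨h.2, h.1⟩

theorem equiv_trans {x y z : PGame} (h₁ : x ≈ y) (h₂ : y ≈ z) : x ≈ z :=
  ⟨le_trans (α := PGame) h₁.1 h₂.1, le_trans (α := PGame) h₂.2 h₁.2⟩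

instance : Trans (· ≈ · : PGame → PGame → Prop) (· ≈ ·) (· ≈ ·) := ⟨equiv_trans⟩

instance setoid : Setoid PGame :=
  ⟨(· ≈ ·), ⟨fun _ => equiv_rfl, equiv_symm, equiv_trans⟩⟩

theorem mk_equiv_mk {α β : Type u} {L₁ L₂ : α → PGame} {R₁ R₂ : β → PGame}
    (hL : ∀ a, L₁ a ≈ L₂ a) (hR : ∀ b, R₁ b ≈ R₂ b) : mk α β L₁ R₁ ≈ mk α β L₂ R₂ :=
  ⟨le_iff_forall_lf.2 ⟨fun a => lf_of_le_of_lf (hL a).1 (moveLeft_lf (x := mk α β L₂ R₂) a),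
      fun b => lf_of_moveRight_le (x := mk α β L₁ R₁) (j := b) (hR b).1⟩,
    le_iff_forall_lf.2 ⟨fun a => lf_of_le_of_lf (hL a).2 (moveLeft_lf (x := mk α β L₁ R₁) a),
      fun b => lf_of_moveRight_le (x := mk α β L₂ R₂) (j := b) (hR b).2⟩⟩

instance : IsEmpty (0 : PGame).LeftMoves := inferInstanceAs (IsEmpty PEmpty)

instance : IsEmpty (0 : PGame).RightMoves := inferInstanceAs (IsEmpty PEmpty)

/-! ### Sums and negatives -/

theorem neg_le_neg_iff_and_flip (x y : PGame) : (-y ≤ -x ↔ x ≤ y) ∧ (-x ≤ -y ↔ y ≤ x) := by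
  have lf_iff : ∀ a b : PGame, (-a ≤ -b ↔ b ≤ a) → (-b ⧏ -a ↔ a ⧏ b) := fun a b h => by
    rw [lf_iff_not_le, lf_iff_not_le, h]
  induction x generalizing y with
  | mk xl xr xL xR ihxl ihxr =>
  induction y with
  | mk yl yr yL yR ihyl ihyr =>
  constructor <;> rw [le_iff_forall_lf, le_iff_forall_lf, and_comm]
  · exact and_congr (forall_congr' fun i => lf_iff _ _ (ihxl i _).2)
      (forall_congr' fun j => lf_iff _ _ (ihyr j).2)
  · exact and_congr (forall_congr' fun i => lf_iff _ _ (ihyl i).1)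
      (forall_congr' fun j => lf_iff _ _ (ihxr j _).1)

theorem neg_le_neg_iff {x y : PGame} : -y ≤ -x ↔ x ≤ y := (neg_le_neg_iff_and_flip x y).1

theorem neg_congr {x y : PGame} (h : x ≈ y) : -x ≈ -y :=
  ⟨neg_le_neg_iff.2 h.2, neg_le_neg_iff.2 h.1⟩

def toLeftMovesAdd {x y : PGame} : x.LeftMoves ⊕ y.LeftMoves ≃ (x + y).LeftMoves :=
  Equiv.cast (by cases x; cases y; rfl)

def toRightMovesAdd {x y : PGame} : x.RightMoves ⊕ y.RightMoves ≃ (x + y).RightMoves :=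
  Equiv.cast (by cases x; cases y; rfl)

theorem add_moveLeft_inl {x y : PGame} (i : x.LeftMoves) :
    (x + y).moveLeft (toLeftMovesAdd (.inl i)) = x.moveLeft i + y := by
  cases x; cases y; rfl

theorem add_moveLeft_inr {x y : PGame} (i : y.LeftMoves) :
    (x + y).moveLeft (toLeftMovesAdd (.inr i)) = x + y.moveLeft i := by
  cases x; cases y; rfl

theorem add_moveRight_inl {x y : PGame} (j : x.RightMoves) :
    (x + y).moveRight (toRightMovesAdd (.inl j)) = x.moveRight j + y := by
  cases x; cases y; rfl

theorem add_moveRight_inr {x y : PGame} (j : y.RightMoves) :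
    (x + y).moveRight (toRightMovesAdd (.inr j)) = x + y.moveRight j := by
  cases x; cases y; rfl

theorem add_le_add_right_and_lf (x y z : PGame) :
    (x ≤ y → x + z ≤ y + z) ∧ (x ⧏ y → x + z ⧏ y + z) := by
  induction x generalizing y z with
  | mk xl xr xL xR ihxl ihxr =>
  induction y generalizing z with
  | mk yl yr yL yR ihyl ihyr =>
  induction z with
  | mk zl zr zL zR ihzl ihzr =>
  constructor
  · intro h
    refine le_iff_forall_lf.2 ⟨?_, ?_⟩
    · rintro (i | k)
      · exact (ihxl i _ _).2 ((le_iff_forall_lf.1 h).1 i)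
      · exact lf_of_le_of_lf ((ihzl k).1 h)
          (moveLeft_lf (x := mk yl yr yL yR + mk zl zr zL zR) (.inr k))
    · rintro (j | k)
      · exact (ihyr j _).2 ((le_iff_forall_lf.1 h).2 j)
      · exact lf_of_lf_of_le (lf_moveRight (x := mk xl xr xL xR + mk zl zr zL zR) (.inr k))
          ((ihzr k).1 h)
  · intro h
    rcases lf_iff_exists_le.1 h with ⟨i, hi⟩ | ⟨j, hj⟩
    · exact lf_of_le_moveLeft (i := .inl i) ((ihyl i _).1 hi)
    · exact lf_of_moveRight_le (j := .inl j) ((ihxr j _ _).1 hj)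

theorem add_le_add_right' {x y : PGame} (h : x ≤ y) (z : PGame) : x + z ≤ y + z :=
  (add_le_add_right_and_lf x y z).1 h

theorem add_lf_add_right {x y : PGame} (h : x ⧏ y) (z : PGame) : x + z ⧏ y + z :=
  (add_le_add_right_and_lf x y z).2 h

theorem add_comm_le {x y : PGame} : x + y ≤ y + x := by
  induction x generalizing y with
  | mk xl xr xL xR ihxl ihxr =>
  induction y with
  | mk yl yr yL yR ihyl ihyr =>
  refine le_iff_forall_lf.2 ⟨?_, ?_⟩
  · rintro (i | i)
    · exact lf_of_le_moveLeft (i := .inr i) (ihxl i)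
    · exact lf_of_le_moveLeft (i := .inl i) (ihyl i)
  · rintro (j | j)
    · exact lf_of_moveRight_le (j := .inr j) (ihyr j)
    · exact lf_of_moveRight_le (j := .inl j) (ihxr j)

theorem add_comm_equiv (x y : PGame) : x + y ≈ y + x := ⟨add_comm_le, add_comm_le⟩

theorem add_le_add_left' {y z : PGame} (h : y ≤ z) (x : PGame) : x + y ≤ x + z :=
  add_comm_le.trans ((add_le_add_right' h x).trans add_comm_le)

theorem add_lf_add_left {y z : PGame} (h : y ⧏ z) (x : PGame) : x + y ⧏ x + z :=
  lf_of_le_of_lf add_comm_le (lf_of_lf_of_le (add_lf_add_right h x) add_comm_le)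

theorem add_congr {w x y z : PGame} (h₁ : w ≈ x) (h₂ : y ≈ z) : w + y ≈ x + z :=
  ⟨(add_le_add_right' h₁.1 y).trans (add_le_add_left' h₂.1 x),
    (add_le_add_right' h₁.2 z).trans (add_le_add_left' h₂.2 w)⟩

theorem add_assoc_equiv (x y z : PGame) : x + y + z ≈ x + (y + z) := by
  induction x generalizing y z with
  | mk xl xr xL xR ihxl ihxr =>
  induction y generalizing z with
  | mk yl yr yL yR ihyl ihyr =>
  induction z with
  | mk zl zr zL zR ihzl ihzr =>
  constructor <;> refine le_iff_forall_lf.2 ⟨?_, ?_⟩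
  · rintro ((i | i) | i)
    · exact lf_of_le_moveLeft (i := .inl i) (ihxl i _ _).1
    · exact lf_of_le_moveLeft (i := .inr (.inl i)) (ihyl i _).1
    · exact lf_of_le_moveLeft (i := .inr (.inr i)) (ihzl i).1
  · rintro (j | j | j)
    · exact lf_of_moveRight_le (j := .inl (.inl j)) (ihxr j _ _).1
    · exact lf_of_moveRight_le (j := .inl (.inr j)) (ihyr j _).1
    · exact lf_of_moveRight_le (j := .inr j) (ihzr j).1
  · rintro (i | i | i)
    · exact lf_of_le_moveLeft (i := .inl (.inl i)) (ihxl i (mk yl yr yL yR) (mk zl zr zL zR)).2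
    · exact lf_of_le_moveLeft (i := .inl (.inr i)) (ihyl i (mk zl zr zL zR)).2
    · exact lf_of_le_moveLeft (i := .inr i) (ihzl i).2
  · rintro ((j | j) | j)
    · exact lf_of_moveRight_le (j := .inl j) (ihxr j (mk yl yr yL yR) (mk zl zr zL zR)).2
    · exact lf_of_moveRight_le (j := .inr (.inl j)) (ihyr j (mk zl zr zL zR)).2
    · exact lf_of_moveRight_le (j := .inr (.inr j)) (ihzr j).2

theorem zero_add_equiv (x : PGame) : 0 + x ≈ x := by
  induction x with
  | mk xl xr xL xR ihl ihr =>
  constructor <;> refine le_iff_forall_lf.2 ⟨?_, ?_⟩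
  · rintro (i | i)
    · exact i.elim
    · exact lf_of_le_moveLeft (i := i) (ihl i).1
  · exact fun j => lf_of_moveRight_le (j := .inr j) (ihr j).1
  · exact fun i => lf_of_le_moveLeft (i := .inr i) (ihl i).2
  · rintro (j | j)
    · exact j.elim
    · exact lf_of_moveRight_le (j := j) (ihr j).2

theorem add_zero_equiv (x : PGame) : x + 0 ≈ x :=
  equiv_trans (add_comm_equiv x 0) (zero_add_equiv x)

theorem add_neg_cancel_equiv (x : PGame) : x + -x ≈ 0 := by
  induction x with
  | mk xl xr xL xR ihl ihr =>
  constructor <;> refine le_iff_forall_lf.2 ⟨?_, ?_⟩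
  · rintro (i | j)
    · exact lf_of_moveRight_le (x := xL i + -mk xl xr xL xR)
        (j := toRightMovesAdd (.inr (i : (-mk xl xr xL xR).RightMoves)))
        ((add_moveRight_inr _).trans_le (ihl i).1)
    · exact lf_of_moveRight_le (x := mk xl xr xL xR + -xR j)
        (j := toRightMovesAdd (.inl (j : (mk xl xr xL xR).RightMoves)))
        ((add_moveRight_inl _).trans_le (ihr j).1)
  · exact isEmptyElim
  · exact isEmptyElim
  · rintro (j | i)
    · exact lf_of_le_moveLeft (y := xR j + -mk xl xr xL xR)
        (i := toLeftMovesAdd (.inr (j : (-mk xl xr xL xR).LeftMoves)))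
        (le_of_le_of_eq (ihr j).2 (add_moveLeft_inr (x := xR j) (y := -mk xl xr xL xR) j).symm)
    · exact lf_of_le_moveLeft (y := mk xl xr xL xR + -xL i)
        (i := toLeftMovesAdd (.inl (i : (mk xl xr xL xR).LeftMoves)))
        (le_of_le_of_eq (ihl i).2 (add_moveLeft_inl (x := mk xl xr xL xR) (y := -xL i) i).symm)

end SetTheory.PGame

theorem add_le_add_of_sub_le_of_add_le {G : Type*} [AddCommGroup G] [PartialOrder G]
    [IsOrderedAddMonoid G] {a b d x y : G} (h₁ : a - b ≤ d) (h₂ : x + d ≤ y) : x + a ≤ y + b :=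
  calc x + a ≤ x + (d + b) := by gcongr; exact sub_le_iff_le_add.1 h₁
    _ = x + d + b := (add_assoc x d b).symm
    _ ≤ y + b := by gcongr

theorem neg_add_le_neg_of_add_le {G : Type*} [AddCommGroup G] [PartialOrder G]
    [IsOrderedAddMonoid G] {a b d : G} (h : a + d ≤ b) : -b + d ≤ -a := by
  rw [← sub_nonneg] at h ⊢
  convert h using 1
  abel

/-! ### Games -/

namespace SetTheory

-- The order is Mathlib's order on a quotient, the transitive closure of `≤ ∨ ≈`; on pregames
-- this is just `≤` again, by `le_of_mk_le_mk`.
abbrev Game := Quotient PGame.setoid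

theorem PGame.le_of_mk_le_mk {x y : PGame} (h : (⟦x⟧ : Game) ≤ ⟦y⟧) : x ≤ y := by
  induction h with
  | single h => exact h.elim id (·.1)
  | tail _ h ih => exact ih.trans (h.elim id (·.1))

namespace Game

instance : Zero Game := ⟨⟦0⟧⟩

instance : Add Game := ⟨Quotient.map₂ (· + ·) fun _ _ hx _ _ hy => PGame.add_congr hx hy⟩

instance : Neg Game := ⟨Quotient.map Neg.neg fun _ _ h => PGame.neg_congr h⟩

instance : PartialOrder Game where
  le_antisymm := by
    rintro ⟨x⟩ ⟨y⟩ h₁ h₂; exact Quot.sound ⟨PGame.le_of_mk_le_mk h₁, PGame.le_of_mk_le_mk h₂⟩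

instance : AddCommGroup Game where
  add_assoc := by rintro ⟨x⟩ ⟨y⟩ ⟨z⟩; exact Quot.sound (PGame.add_assoc_equiv x y z)
  zero_add := by rintro ⟨x⟩; exact Quot.sound (PGame.zero_add_equiv x)
  add_zero := by rintro ⟨x⟩; exact Quot.sound (PGame.add_zero_equiv x)
  nsmul := nsmulRec
  zsmul := zsmulRec
  neg_add_cancel := by
    rintro ⟨x⟩
    exact Quot.sound (PGame.equiv_trans (PGame.add_comm_equiv _ _) (PGame.add_neg_cancel_equiv x))
  add_comm := by rintro ⟨x⟩ ⟨y⟩; exact Quot.sound (PGame.add_comm_equiv x y)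

instance : IsOrderedAddMonoid Game where
  add_le_add_left := by
    rintro ⟨a⟩ ⟨b⟩ h ⟨c⟩
    exact .single (.inl (PGame.add_le_add_right' (PGame.le_of_mk_le_mk h) c))

end Game

end SetTheory

namespace SetTheory.PGame

theorem quot_neg (x : PGame) : (⟦-x⟧ : Game) = -⟦x⟧ := rfl

theorem quot_zero : (⟦0⟧ : Game) = 0 := rfl

theorem le_iff_game_le {x y : PGame} : x ≤ y ↔ (⟦x⟧ : Game) ≤ ⟦y⟧ :=
  ⟨fun h => .single (.inl h), le_of_mk_le_mk⟩

/-! ### Dyadic rationals -/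

instance (n : ℕ) : Unique (powHalf n).LeftMoves := by
  cases n <;> exact PUnit.instUnique

instance : IsEmpty (powHalf 0).RightMoves := inferInstanceAs (IsEmpty PEmpty)

theorem powHalf_moveLeft (n : ℕ) (i : (powHalf n).LeftMoves) : (powHalf n).moveLeft i = 0 := by
  cases n <;> rfl

theorem powHalf_succ_moveRight (n : ℕ) (j : (powHalf (n + 1)).RightMoves) :
    (powHalf (n + 1)).moveRight j = powHalf n := rfl

theorem zero_le_powHalf (n : ℕ) : 0 ≤ powHalf n := by
  refine le_iff_forall_lf.2 ⟨isEmptyElim, fun j => ?_⟩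
  cases n with
  | zero => exact isEmptyElim j
  | succ n => exact lf_of_le_moveLeft (y := powHalf n) (i := default) (by rw [powHalf_moveLeft])

theorem powHalf_succ_lf (n : ℕ) : powHalf (n + 1) ⧏ powHalf n :=
  lf_of_moveRight_le (j := PUnit.unit) le_rfl

theorem powHalf_succ_le_powHalf (n : ℕ) : powHalf (n + 1) ≤ powHalf n := by
  have zero_lf : ∀ m, (powHalf (m + 1)).moveLeft default ⧏ powHalf m := fun m =>
    lf_of_le_moveLeft (i := default) (by rw [powHalf_moveLeft, powHalf_moveLeft])
  induction n with
  | zero => exact le_iff_forall_lf.2 ⟨fun _ => zero_lf 0, isEmptyElim⟩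
  | succ n ih =>
    exact le_iff_forall_lf.2 ⟨fun _ => zero_lf (n + 1), fun _ => lf_of_moveRight_le (j := .unit) ih⟩

theorem powHalf_succ_add_powHalf_succ (n : ℕ) :
    (⟦powHalf (n + 1)⟧ : Game) + ⟦powHalf (n + 1)⟧ = ⟦powHalf n⟧ := by
  have of_lf_moveRight : ∀ n : ℕ,
      (∀ j, powHalf (n + 1) + powHalf (n + 1) ⧏ (powHalf n).moveRight j) →
        powHalf (n + 1) + powHalf (n + 1) ≈ powHalf n := fun n h => by
    refine ⟨le_iff_forall_lf.2 ⟨?_, h⟩, le_iff_forall_lf.2 ⟨fun i => ?_, ?_⟩⟩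
    · rintro (i | i)
      · exact lf_of_le_of_lf (zero_add_equiv (powHalf (n + 1))).1 (powHalf_succ_lf n)
      · exact lf_of_le_of_lf (add_zero_equiv (powHalf (n + 1))).1 (powHalf_succ_lf n)
    · rw [powHalf_moveLeft]
      exact lf_of_le_moveLeft (i := .inl PUnit.unit)
        ((zero_le_powHalf (n + 1)).trans (zero_add_equiv _).2)
    · rintro (j | j)
      · exact lf_of_le_moveLeft (y := powHalf n + powHalf (n + 1))
          (i := toLeftMovesAdd (.inr default))
          (by rw [add_moveLeft_inr, powHalf_moveLeft]; exact (add_zero_equiv _).2)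
      · exact lf_of_le_moveLeft (y := powHalf (n + 1) + powHalf n)
          (i := toLeftMovesAdd (.inl default))
          (by rw [add_moveLeft_inl, powHalf_moveLeft]; exact (zero_add_equiv _).2)
  induction n with
  | zero => exact Quot.sound (of_lf_moveRight 0 isEmptyElim)
  | succ n ih =>
    refine Quot.sound (of_lf_moveRight (n + 1) fun _ => lf_of_moveRight_le (j := .inl .unit) ?_)
    exact (add_le_add_left' (powHalf_succ_le_powHalf (n + 1)) _).trans (le_of_mk_le_mk ih.le)

def OptionsSeparated (k : ℕ) (x : PGame) : Prop :=
  (∀ i, (⟦x.moveLeft i⟧ : Game) + ⟦powHalf k⟧ ≤ ⟦x⟧) ∧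
    ∀ j, (⟦x⟧ : Game) + ⟦powHalf k⟧ ≤ ⟦x.moveRight j⟧

theorem optionsSeparated_zero (k : ℕ) : OptionsSeparated k 0 := ⟨isEmptyElim, isEmptyElim⟩

theorem OptionsSeparated.add {k : ℕ} {x y : PGame} (hx : x.OptionsSeparated k)
    (hy : y.OptionsSeparated k) : (x + y).OptionsSeparated k := by
  obtain ⟨xl, xr, xL, xR⟩ := x
  obtain ⟨yl, yr, yL, yR⟩ := y
  set d : Game := ⟦powHalf k⟧
  have right_add : ∀ {a b : Game} (c : Game), a + d ≤ b → a + c + d ≤ b + c := fun c h => by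
    rw [add_right_comm]; gcongr
  have left_add : ∀ {a b : Game} (c : Game), a + d ≤ b → c + a + d ≤ c + b := fun c h => by
    rw [add_assoc]; gcongr
  refine ⟨?_, ?_⟩
  · rintro (i | i)
    · exact right_add ⟦mk yl yr yL yR⟧ (hx.1 i)
    · exact left_add ⟦mk xl xr xL xR⟧ (hy.1 i)
  · rintro (j | j)
    · exact right_add ⟦mk yl yr yL yR⟧ (hx.2 j)
    · exact left_add ⟦mk xl xr xL xR⟧ (hy.2 j)

theorem OptionsSeparated.neg {k : ℕ} {x : PGame} (hx : x.OptionsSeparated k) :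
    (-x).OptionsSeparated k := by
  obtain ⟨xl, xr, xL, xR⟩ := x
  exact ⟨fun j => neg_add_le_neg_of_add_le (hx.2 j), fun i => neg_add_le_neg_of_add_le (hx.1 i)⟩

theorem optionsSeparated_powHalf (n : ℕ) : (powHalf n).OptionsSeparated n := by
  refine ⟨fun i => by rw [powHalf_moveLeft, quot_zero, zero_add], fun j => ?_⟩
  cases n with
  | zero => exact isEmptyElim j
  | succ n => rw [powHalf_succ_moveRight, powHalf_succ_add_powHalf_succ]

theorem OptionsSeparated.nsmulPG {k : ℕ} {x : PGame} (hx : x.OptionsSeparated k) (n : ℕ) :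
    (nsmulPG n x).OptionsSeparated k := by
  induction n with
  | zero => exact optionsSeparated_zero k
  | succ n ih => exact ih.add hx

theorem OptionsSeparated.zsmulPG {k : ℕ} {x : PGame} (hx : x.OptionsSeparated k) (m : ℤ) :
    (zsmulPG m x).OptionsSeparated k := by
  cases m with
  | ofNat n => exact hx.nsmulPG n
  | negSucc n => exact (hx.nsmulPG (n + 1)).neg

end SetTheory.PGame

namespace SeqCompound

open PGame

/-! ### Dicotic games -/

theorem Dicotic.neg : ∀ {G : PGame}, Dicotic G → Dicotic (-G)
  | mk _ _ _ _, ⟨hLR, hL, hR⟩ => ⟨hLR.symm, fun j => (hR j).neg, fun i => (hL i).neg⟩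

theorem Dicotic.le_powHalf_and_lf_powHalf {d : PGame} (hd : Dicotic d) (k : ℕ) :
    d ≤ powHalf k ∧ d ⧏ powHalf k := by
  induction d generalizing k with
  | mk α β L R ihL ihR =>
  obtain ⟨hLR, hL, hR⟩ := hd
  have lf : ∀ k, mk α β L R ⧏ powHalf k := fun k => by
    rcases isEmpty_or_nonempty β with hβ | ⟨⟨b⟩⟩
    · have : IsEmpty α := not_nonempty_iff.1 (mt hLR.1 (not_nonempty_iff.2 hβ))
      refine lf_of_le_moveLeft (i := default) ?_
      rw [powHalf_moveLeft]
      exact le_iff_forall_lf.2 ⟨isEmptyElim (α := α), isEmptyElim⟩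
    · exact lf_of_moveRight_le (j := b) (ihR b (hR b) k).1
  refine ⟨le_iff_forall_lf.2 ⟨fun a => (ihL a (hL a) k).2, fun j => ?_⟩, lf k⟩
  cases k with
  | zero => exact isEmptyElim j
  | succ k => exact lf k

theorem Dicotic.sub_le_powHalf {a b : PGame} (ha : Dicotic a) (hb : Dicotic b) (k : ℕ) :
    (⟦a⟧ : Game) - ⟦b⟧ ≤ ⟦powHalf k⟧ := by
  rw [← powHalf_succ_add_powHalf_succ, sub_eq_add_neg, ← quot_neg]
  exact add_le_add (le_iff_game_le.1 (ha.le_powHalf_and_lf_powHalf (k + 1)).1)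
    (le_iff_game_le.1 (hb.neg.le_powHalf_and_lf_powHalf (k + 1)).1)

theorem mk_add_equiv_add_mk {α β : Type u} [Nonempty α] [Nonempty β] {L : α → PGame}
    {R : β → PGame} (hA : Dicotic (mk α β L R)) {x : PGame} {k : ℕ} (hx : x.OptionsSeparated k) :
    mk α β (fun a => x + L a) (fun b => x + R b) ≈ x + mk α β L R := by
  obtain ⟨a₀⟩ := ‹Nonempty α›
  obtain ⟨b₀⟩ := ‹Nonempty β›
  obtain ⟨xl, xr, xL, xR⟩ := x
  have ⟨_, hL, hR⟩ := hA
  refine ⟨le_iff_forall_lf.2 ⟨?_, ?_⟩, le_iff_forall_lf.2 ⟨?_, ?_⟩⟩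
  · exact fun a => add_lf_add_left (moveLeft_lf (x := mk α β L R) a) _
  · rintro (j | b)
    · refine lf_of_moveRight_le (j := b₀) (le_iff_game_le.2 ?_)
      exact add_le_add_of_sub_le_of_add_le ((hR b₀).sub_le_powHalf hA k) (hx.2 j)
    · exact lf_of_moveRight_le (j := b) le_rfl
  · rintro (i | a)
    · refine lf_of_le_moveLeft (i := a₀) (le_iff_game_le.2 ?_)
      exact add_le_add_of_sub_le_of_add_le (hA.sub_le_powHalf (hL a₀) k) (hx.1 i)
    · exact lf_of_le_moveLeft (i := a) le_rfl
  · exact fun b => add_lf_add_left (lf_moveRight (x := mk α β L R) b) _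

/-! ### Sequential compounds -/

theorem seqc_mk_of_nonempty {α β : Type u} [Nonempty α] [Nonempty β] (L : α → PGame)
    (R : β → PGame) (K : PGame) :
    seqc (mk α β L R) K = mk α β (fun a => seqc (L a) K) (fun b => seqc (R b) K) := by
  rw [seqc, if_pos ‹_›, if_pos ‹_›]

theorem seqc_mk_of_isEmpty {α β : Type u} [IsEmpty α] [IsEmpty β] (L : α → PGame)
    (R : β → PGame) (K : PGame) : seqc (mk α β L R) K = K := by
  rw [seqc, if_neg (not_nonempty_iff.2 ‹_›), if_neg (not_nonempty_iff.2 ‹_›)]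

theorem seqc_add_equiv_add_seqc {X x H : PGame} {k : ℕ} (hXx : X ≈ x)
    (hx : x.OptionsSeparated k) {G : PGame} (hG : Dicotic G) (hGH : Dicotic (seqc G H)) :
    seqc G (X + H) ≈ X + seqc G H := by
  induction G with
  | mk α β L R ihL ihR =>
  obtain ⟨hLR, hL, hR⟩ := hG
  rcases isEmpty_or_nonempty α with hα | hα
  · have : IsEmpty β := not_nonempty_iff.1 (mt hLR.2 (not_nonempty_iff.2 hα))
    rw [seqc_mk_of_isEmpty, seqc_mk_of_isEmpty]
    exact equiv_rfl
  · have : Nonempty β := hLR.1 hα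
    simp only [seqc_mk_of_nonempty] at hGH ⊢
    have ⟨_, hGHL, hGHR⟩ := hGH
    calc mk α β (fun a => seqc (L a) (X + H)) (fun b => seqc (R b) (X + H))
        ≈ mk α β (fun a => x + seqc (L a) H) (fun b => x + seqc (R b) H) :=
          mk_equiv_mk (fun a => equiv_trans (ihL a (hL a) (hGHL a)) (add_congr hXx equiv_rfl))
            (fun b => equiv_trans (ihR b (hR b) (hGHR b)) (add_congr hXx equiv_rfl))
      _ ≈ x + mk α β (fun a => seqc (L a) H) (fun b => seqc (R b) H) :=
          mk_add_equiv_add_mk hGH hx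
      _ ≈ X + mk α β (fun a => seqc (L a) H) (fun b => seqc (R b) H) :=
          add_congr (equiv_symm hXx) equiv_rfl

end SeqCompound

open SeqCompound in
theorem seqc_number_translation_general (G H X : PGame)
    (hG : Dicotic G) (hGH : Dicotic (seqc G H))
    (hX : ∃ (m : ℤ) (n : ℕ), X ≈ PGame.zsmulPG m (PGame.powHalf n)) :
    seqc G (X + H) ≈ X + seqc G H := by
  obtain ⟨m, n, hX⟩ := hX
  exact seqc_add_equiv_add_seqc hX ((PGame.optionsSeparated_powHalf n).zsmulPG m) hG hGH

open SeqCompound in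
/-- number translation for sequential compounds:
if `G` and `G → H` are dicotic and `X` is equal in value to a dyadic rational,
then `G → (X + H) = X + (G → H)`. -/
theorem seqc_number_translation (G H X : PGame)
    [PGame.Short G] [PGame.Short H] [PGame.Short X]
    (hG : Dicotic G) (hGH : Dicotic (seqc G H))
    (hX : ∃ (m : ℤ) (n : ℕ), X ≈ PGame.zsmulPG m (PGame.powHalf n)) :
    seqc G (X + H) ≈ X + seqc G H :=
  seqc_number_translation_general G H X hG hGH hX
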